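/- arXiv:2208.14850 — 2 statements merged into one kernel-verified Lean document; each statement's English description precedes it below -/
import Mathlib

section
/- If (a_1, …, a_m) and (b_1, …, b_n) are complementary sequences of integers all ≥ 2, then the reversed sequences (a_m, …, a_1) and (b_n, …, b_1) are also complementary. -/
/-- Negative continued fraction `[a₁, …, aₙ]⁻`. -/
def ncf : List ℚ → ℚ
  | [] => 0
  | [a] => a
  | a :: b :: l => a - 1 / ncf (b :: l)

/-- Negative continued fraction of a list of integers. -/
def ncfZ (l : List ℤ) : ℚ := ncf (l.map (fun x => (x : ℚ)))

/-- Two sequences of integers, all ≥ 2, are complementary if the reciprocals of their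
negative continued fractions sum to 1. -/
def Complementary (a b : List ℤ) : Prop :=
  a ≠ [] ∧ b ≠ [] ∧ (∀ x ∈ a, 2 ≤ x) ∧ (∀ x ∈ b, 2 ≤ x) ∧
    1 / ncfZ a + 1 / ncfZ b = 1

/-- The standard negative definite bilinear form on `ℤ^N`. -/
def negForm {N : ℕ} (x y : Fin N → ℤ) : ℤ := -∑ i, x i * y i

/-! Writing `x, y > 1` for the two continued fractions, complementarity says `(x - 1) (y - 1) = 1`,
and this is preserved by `x ↦ x + 1, y ↦ 2 - 1/y`, i.e. by raising the head of `a` by one and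
prepending `2` to `b`. Conversely, if the head of `a` is `≥ 3` then `x > 2`, so `y < 2` and `b`
must start with a `2` followed by a complementary partner of `a` with its head lowered. Hence the
complementary pairs are exactly those generated from `([2], [2])` by this move and its mirror
image. By induction on the generation, the generated set is also closed under the same moves
performed at the ends of the sequences, and therefore under reversal. -/

lemma one_div_add_one_div_eq_one_iff {x y : ℚ} (hx : x ≠ 0) (hy : y ≠ 0) :
    1 / x + 1 / y = 1 ↔ (x - 1) * (y - 1) = 1 := by
  field_simp
  constructor <;> intro h <;> linarith

lemma mul_one_sub_one_div_eq_one_iff {x y : ℚ} (hy : y ≠ 0) :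
    x * (1 - 1 / y) = 1 ↔ (x - 1) * (y - 1) = 1 := by
  field_simp
  constructor <;> intro h <;> linarith

@[simp] lemma ncfZ_singleton (c : ℤ) : ncfZ [c] = c := rfl

lemma ncfZ_cons (c : ℤ) {t : List ℤ} (ht : t ≠ []) : ncfZ (c :: t) = c - 1 / ncfZ t := by
  obtain ⟨d, u, rfl⟩ := List.exists_cons_of_ne_nil ht
  rfl

lemma one_lt_ncfZ {l : List ℤ} (hl : l ≠ []) (h2 : ∀ x ∈ l, 2 ≤ x) : 1 < ncfZ l := by
  induction l with
  | nil => exact absurd rfl hl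
  | cons c t ih =>
    simp only [List.forall_mem_cons] at h2
    have hc : (2 : ℚ) ≤ c := by exact_mod_cast h2.1
    rcases eq_or_ne t [] with rfl | ht
    · simp only [ncfZ_singleton]; linarith
    · have ht1 := ih ht h2.2
      rw [ncfZ_cons c ht]
      have : 1 / ncfZ t < 1 := (div_lt_one (by linarith)).2 ht1
      linarith

lemma ncfZ_cons_lt (c : ℤ) {t : List ℤ} (ht : t ≠ []) (h2 : ∀ x ∈ t, 2 ≤ x) :
    ncfZ (c :: t) < c := by
  have := one_lt_ncfZ ht h2
  rw [ncfZ_cons c ht]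
  have : 0 < 1 / ncfZ t := by positivity
  linarith

lemma ncfZ_cons_le (c : ℤ) {t : List ℤ} (h2 : ∀ x ∈ t, 2 ≤ x) : ncfZ (c :: t) ≤ c := by
  rcases eq_or_ne t [] with rfl | ht
  · simp
  · exact (ncfZ_cons_lt c ht h2).le

lemma sub_one_lt_ncfZ_cons (c : ℤ) {t : List ℤ} (h2 : ∀ x ∈ t, 2 ≤ x) :
    (c : ℚ) - 1 < ncfZ (c :: t) := by
  rcases eq_or_ne t [] with rfl | ht
  · simp
  · have := one_lt_ncfZ ht h2
    rw [ncfZ_cons c ht]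
    have : 1 / ncfZ t < 1 := (div_lt_one (by linarith)).2 this
    linarith

def bumpHead : List ℤ → List ℤ
  | [] => []
  | c :: t => (c + 1) :: t

def bumpLast (l : List ℤ) : List ℤ := (bumpHead l.reverse).reverse

@[simp] lemma bumpHead_cons (c : ℤ) (t : List ℤ) : bumpHead (c :: t) = (c + 1) :: t := rfl

lemma bumpHead_ne_nil {l : List ℤ} (hl : l ≠ []) : bumpHead l ≠ [] := by
  obtain ⟨c, t, rfl⟩ := List.exists_cons_of_ne_nil hl
  simp

lemma bumpHead_append {l : List ℤ} (hl : l ≠ []) (l' : List ℤ) :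
    bumpHead (l ++ l') = bumpHead l ++ l' := by
  obtain ⟨c, t, rfl⟩ := List.exists_cons_of_ne_nil hl
  rfl

lemma reverse_bumpHead (l : List ℤ) : (bumpHead l).reverse = bumpLast l.reverse := by
  simp [bumpLast]

lemma bumpLast_cons (c : ℤ) {l : List ℤ} (hl : l ≠ []) :
    bumpLast (c :: l) = c :: bumpLast l := by
  simp [bumpLast, bumpHead_append (List.reverse_ne_nil_iff.2 hl)]

lemma bumpLast_bumpHead (l : List ℤ) : bumpLast (bumpHead l) = bumpHead (bumpLast l) := by
  rcases l with _ | ⟨c, t⟩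
  · rfl
  rcases eq_or_ne t [] with rfl | ht
  · rfl
  · simp [bumpLast_cons _ ht]

lemma two_le_of_mem_bumpHead {l : List ℤ} (h2 : ∀ x ∈ l, 2 ≤ x) :
    ∀ x ∈ bumpHead l, 2 ≤ x := by
  rcases l with _ | ⟨c, t⟩
  · simp [bumpHead]
  · simp only [List.forall_mem_cons, bumpHead_cons] at h2 ⊢
    exact ⟨by omega, h2.2⟩

lemma ncfZ_bumpHead {l : List ℤ} (hl : l ≠ []) : ncfZ (bumpHead l) = ncfZ l + 1 := by
  obtain ⟨c, t, rfl⟩ := List.exists_cons_of_ne_nil hl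
  rcases eq_or_ne t [] with rfl | ht
  · simp
  · simp only [bumpHead_cons, ncfZ_cons _ ht]
    push_cast
    ring

namespace Complementary

lemma iff_sub_one_mul_sub_one {a b : List ℤ} :
    Complementary a b ↔ a ≠ [] ∧ b ≠ [] ∧ (∀ x ∈ a, 2 ≤ x) ∧ (∀ x ∈ b, 2 ≤ x) ∧
      (ncfZ a - 1) * (ncfZ b - 1) = 1 := by
  refine and_congr_right fun ha => and_congr_right fun hb => and_congr_right fun h2a =>
    and_congr_right fun h2b => ?_
  exact one_div_add_one_div_eq_one_iff (by linarith [one_lt_ncfZ ha h2a])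
    (by linarith [one_lt_ncfZ hb h2b])

lemma symm {a b : List ℤ} (h : Complementary a b) : Complementary b a := by
  obtain ⟨ha, hb, h2a, h2b, h⟩ := h
  exact ⟨hb, ha, h2b, h2a, by rw [add_comm, h]⟩

lemma bumpHead_two_cons {a b : List ℤ} (h : Complementary a b) :
    Complementary (bumpHead a) (2 :: b) := by
  rw [iff_sub_one_mul_sub_one] at h ⊢
  obtain ⟨ha, hb, h2a, h2b, h⟩ := h
  refine ⟨bumpHead_ne_nil ha, List.cons_ne_nil _ _, two_le_of_mem_bumpHead h2a,
    List.forall_mem_cons.2 ⟨le_rfl, h2b⟩, ?_⟩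
  have hy := one_lt_ncfZ hb h2b
  convert (mul_one_sub_one_div_eq_one_iff (by linarith)).2 h using 1
  rw [ncfZ_bumpHead ha, ncfZ_cons 2 hb]
  push_cast
  ring

lemma exists_eq_two_cons {c : ℤ} {t b : List ℤ} (h : Complementary (c :: t) b) (hc : 3 ≤ c) :
    ∃ u, b = 2 :: u ∧ Complementary ((c - 1) :: t) u := by
  rw [iff_sub_one_mul_sub_one] at h
  obtain ⟨-, hb, h2a, h2b, h⟩ := h
  obtain ⟨d, u, rfl⟩ := List.exists_cons_of_ne_nil hb
  simp only [List.forall_mem_cons] at h2a h2b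
  have hx : 2 < ncfZ (c :: t) := by
    have := sub_one_lt_ncfZ_cons c h2a.2
    have : (3 : ℚ) ≤ c := by exact_mod_cast hc
    linarith
  have hy1 := one_lt_ncfZ hb (List.forall_mem_cons.2 h2b)
  have hy : ncfZ (d :: u) < 2 := by nlinarith
  obtain rfl : d = 2 := by
    by_contra hd
    have := sub_one_lt_ncfZ_cons d h2b.2
    have : (3 : ℚ) ≤ d := by exact_mod_cast (show 3 ≤ d by omega)
    linarith
  have hu : u ≠ [] := by
    rintro rfl
    simp at hy
  refine ⟨u, rfl, ?_⟩
  rw [iff_sub_one_mul_sub_one]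
  refine ⟨List.cons_ne_nil _ _, hu, List.forall_mem_cons.2 ⟨by omega, h2a.2⟩, h2b.2, ?_⟩
  have hz := one_lt_ncfZ hu h2b.2
  have hbump := ncfZ_bumpHead (List.cons_ne_nil (c - 1) t)
  rw [bumpHead_cons, sub_add_cancel] at hbump
  rw [← mul_one_sub_one_div_eq_one_iff (by linarith)]
  convert h using 1
  rw [hbump, ncfZ_cons 2 hu]
  push_cast
  ring

lemma eq_nil_of_two_cons {t u : List ℤ} (h : Complementary (2 :: t) (2 :: u)) :
    t = [] ∧ u = [] := by
  rw [iff_sub_one_mul_sub_one] at h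
  obtain ⟨-, -, h2a, h2b, h⟩ := h
  simp only [List.forall_mem_cons] at h2a h2b
  have hx := one_lt_ncfZ (List.cons_ne_nil 2 t) (List.forall_mem_cons.2 h2a)
  have hy := one_lt_ncfZ (List.cons_ne_nil 2 u) (List.forall_mem_cons.2 h2b)
  have hx2 := ncfZ_cons_le 2 h2a.2
  have hy2 := ncfZ_cons_le 2 h2b.2
  push_cast at hx2 hy2
  constructor
  · by_contra ht
    have := ncfZ_cons_lt 2 ht h2a.2
    push_cast at this
    nlinarith
  · by_contra hu
    have := ncfZ_cons_lt 2 hu h2b.2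
    push_cast at this
    nlinarith

end Complementary

inductive ComplementaryGen : List ℤ → List ℤ → Prop
  | base : ComplementaryGen [2] [2]
  | bump_left {a b : List ℤ} : ComplementaryGen a b → ComplementaryGen (bumpHead a) (2 :: b)
  | bump_right {a b : List ℤ} : ComplementaryGen a b → ComplementaryGen (2 :: a) (bumpHead b)

namespace ComplementaryGen

lemma symm {a b : List ℤ} (h : ComplementaryGen a b) : ComplementaryGen b a := by
  induction h with
  | base => exact base
  | bump_left _ ih => exact ih.bump_right
  | bump_right _ ih => exact ih.bump_left

lemma complementary {a b : List ℤ} (h : ComplementaryGen a b) : Complementary a b := by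
  induction h with
  | base => exact ⟨List.cons_ne_nil _ _, List.cons_ne_nil _ _, by simp, by simp, by norm_num⟩
  | bump_left _ ih => exact ih.bumpHead_two_cons
  | bump_right _ ih => exact ih.symm.bumpHead_two_cons.symm

lemma ne_nil_left {a b : List ℤ} (h : ComplementaryGen a b) : a ≠ [] :=
  h.complementary.1

lemma ne_nil_right {a b : List ℤ} (h : ComplementaryGen a b) : b ≠ [] :=
  h.complementary.2.1

lemma bumpLast_append_two {a b : List ℤ} (h : ComplementaryGen a b) :
    ComplementaryGen (bumpLast a) (b ++ [2]) := by
  induction h with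
  | base => exact base.bump_left
  | bump_left _ ih =>
    rw [bumpLast_bumpHead]
    exact ih.bump_left
  | bump_right h ih =>
    rw [bumpLast_cons 2 h.ne_nil_left, ← bumpHead_append h.ne_nil_right]
    exact ih.bump_right

lemma reverse {a b : List ℤ} (h : ComplementaryGen a b) :
    ComplementaryGen a.reverse b.reverse := by
  induction h with
  | base => exact base
  | bump_left _ ih => simpa [reverse_bumpHead] using ih.bumpLast_append_two
  | bump_right _ ih => simpa [reverse_bumpHead] using ih.symm.bumpLast_append_two.symm

end ComplementaryGen

theorem Complementary.complementaryGen {a b : List ℤ} (h : Complementary a b) :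
    ComplementaryGen a b := by
  obtain ⟨c, t, rfl⟩ := List.exists_cons_of_ne_nil h.1
  obtain ⟨d, u, rfl⟩ := List.exists_cons_of_ne_nil h.2.1
  have hc : 2 ≤ c := h.2.2.1 c List.mem_cons_self
  have hd : 2 ≤ d := h.2.2.2.1 d List.mem_cons_self
  rcases (show c = 2 ∨ 3 ≤ c by omega) with rfl | hc
  · rcases (show d = 2 ∨ 3 ≤ d by omega) with rfl | hd
    · obtain ⟨rfl, rfl⟩ := h.eq_nil_of_two_cons
      exact .base
    · obtain ⟨t', ht, h'⟩ := h.symm.exists_eq_two_cons hd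
      obtain rfl := (List.cons.inj ht).2
      simpa using h'.symm.complementaryGen.bump_right
  · obtain ⟨u', hu, h'⟩ := h.exists_eq_two_cons hc
    obtain ⟨rfl, rfl⟩ := List.cons.inj hu
    simpa using h'.complementaryGen.bump_left
termination_by a.length + b.length

theorem complementary_reverse (a b : List ℤ) (h : Complementary a b) :
    Complementary a.reverse b.reverse :=
  h.complementaryGen.reverse.complementary
end

section
/- For every integer l ≥ 0, the sequences (4, (6)^{[l]}) and (2, 2, (3, 2, 2, 2)^{[l]}, 2) are complementary; that is, 1/[4, 6, …, 6]^- (with l sixes) + 1/[2, 2, 3, 2, 2, 2, …, 3, 2, 2, 2, 2]^- (two 2's, then the block 3, 2, 2, 2 repeated l times, then a final 2) = 1. -/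
/-- Auxiliary sequence `0, 1, 6, 35, 204, …`. -/
def q : ℕ → ℤ
  | 0 => 0
  | 1 => 1
  | (n+2) => 6 * q (n+1) - q n

lemma q_nonneg_lt : ∀ n, 0 ≤ q n ∧ q n < q (n+1) := by
  intro n
  induction n with
  | zero => simp [q]
  | succ m ih =>
    obtain ⟨h0, h1⟩ := ih
    have h2 : q (m+2) = 6 * q (m+1) - q m := rfl
    exact ⟨by linarith, by rw [h2]; linarith⟩

lemma ncf_cons (a : ℚ) (L : List ℚ) (h : L ≠ []) : ncf (a :: L) = a - 1 / ncf L := by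
  cases L with
  | nil => exact absurd rfl h
  | cons b t => rfl

lemma ncf_gt_one : ∀ L : List ℚ, L ≠ [] → (∀ x ∈ L, 2 ≤ x) → 1 < ncf L := by
  intro L
  induction L with
  | nil => intro h; exact absurd rfl h
  | cons a t ih =>
    intro _ hmem
    have ha : 2 ≤ a := hmem a (by simp)
    cases t with
    | nil => simpa [ncf] using by linarith
    | cons b t' =>
      have ht : 1 < ncf (b :: t') := ih (by simp) (fun x hx => hmem x (by simp [hx]))
      have h0 : 0 < ncf (b :: t') := by linarith
      have h1 : 1 / ncf (b :: t') < 1 := by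
        rw [div_lt_one h0]; linarith
      have h2 : 0 < 1 / ncf (b :: t') := by positivity
      rw [ncf_cons a (b :: t') (by simp)]
      linarith


lemma sub_div_eq (c X Y D : ℚ) (hD : D ≠ 0) (h : c * D - X = Y) : c - X / D = Y / D := by
  rw [eq_div_iff hD, sub_mul, div_mul_cancel₀ _ hD, h]

lemma ncf_rep6 : ∀ l : ℕ, ncf (List.replicate (l+1) (6:ℚ)) = (q (l+2) : ℚ) / (q (l+1) : ℚ) := by
  intro l
  induction l with
  | zero => norm_num [ncf, q, List.replicate]
  | succ m ih =>
    have hpos := q_nonneg_lt (m+1)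
    have hpos2 := q_nonneg_lt (m+2)
    have hb : (0:ℚ) < (q (m+2) : ℚ) := by exact_mod_cast lt_of_le_of_lt hpos.1 hpos.2
    have hc : (0:ℚ) < (q (m+3) : ℚ) := by exact_mod_cast lt_of_le_of_lt hpos2.1 hpos2.2
    have hrec : (q (m+3) : ℚ) = 6 * (q (m+2) : ℚ) - (q (m+1) : ℚ) := by
      have h : q (m+3) = 6 * q (m+1+1) - q (m+1) := rfl
      exact_mod_cast congrArg (Int.cast : ℤ → ℚ) h
    rw [List.replicate_succ, ncf_cons _ _ (by simp), ih, hrec]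
    field_simp

lemma ncf_T : ∀ l : ℕ,
    ncf ((List.replicate l [(3:ℚ),2,2,2]).flatten ++ [2])
      = (2 * (q (l+1) : ℚ) - (q l : ℚ)) / ((q (l+1) : ℚ) - (q l : ℚ)) := by
  intro l
  induction l with
  | zero => norm_num [ncf, q]
  | succ m ih =>
    obtain ⟨hb0, hblt⟩ := q_nonneg_lt m
    have hb0' : (0:ℚ) ≤ (q m : ℚ) := by exact_mod_cast hb0
    have hba : (q m : ℚ) < (q (m+1) : ℚ) := by exact_mod_cast hblt
    have ha1 : (1:ℚ) ≤ (q (m+1) : ℚ) := by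
      have h : (1:ℤ) ≤ q (m+1) := by omega
      exact_mod_cast h
    have hrec : (q (m+2) : ℚ) = 6 * (q (m+1) : ℚ) - (q m : ℚ) := by
      have h : q (m+2) = 6 * q (m+1) - q m := rfl
      exact_mod_cast congrArg (Int.cast : ℤ → ℚ) h
    set a : ℚ := (q (m+1) : ℚ) with ha
    set b : ℚ := (q m : ℚ) with hbq
    set R : List ℚ := (List.replicate m [(3:ℚ),2,2,2]).flatten ++ [2] with hR
    have hRne : R ≠ [] := by simp [hR]
    have hRmem : ∀ x ∈ R, (2:ℚ) ≤ x := by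
      intro x hx
      simp only [hR, List.mem_append, List.mem_flatten, List.mem_replicate] at hx
      rcases hx with ⟨L, ⟨_, hL⟩, hxL⟩ | hx
      · subst hL
        simp only [List.mem_cons, List.not_mem_nil, or_false] at hxL
        rcases hxL with h | h | h | h <;> subst h <;> norm_num
      · simp_all
    have hT1 : 1 < ncf R := ncf_gt_one R hRne hRmem
    have hstep : (List.replicate (m+1) [(3:ℚ),2,2,2]).flatten ++ [2]
        = 3 :: 2 :: 2 :: 2 :: R := by
      simp [hR, List.replicate_succ]
    have hx0 : ncf R = (2*a - b) / (a - b) := ih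
    have hden1 : (0:ℚ) < a - b := by linarith
    have hden2 : (0:ℚ) < 2*a - b := by linarith
    have hden3 : (0:ℚ) < 3*a - b := by linarith
    have hden4 : (0:ℚ) < 4*a - b := by linarith
    have hden5 : (0:ℚ) < 5*a - b := by linarith
    have e1 : 2 - 1 / ncf R = (3*a - b) / (2*a - b) := by
      rw [hx0]; rw [one_div_div]; exact sub_div_eq _ _ _ _ (ne_of_gt hden2) (by ring)
    have e2 : 2 - 1 / ((3*a - b) / (2*a - b)) = (4*a - b) / (3*a - b) := by
      rw [one_div_div]; exact sub_div_eq _ _ _ _ (ne_of_gt hden3) (by ring)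
    have e3 : 2 - 1 / ((4*a - b) / (3*a - b)) = (5*a - b) / (4*a - b) := by
      rw [one_div_div]; exact sub_div_eq _ _ _ _ (ne_of_gt hden4) (by ring)
    have e4 : 3 - 1 / ((5*a - b) / (4*a - b)) = (11*a - 2*b) / (5*a - b) := by
      rw [one_div_div]; exact sub_div_eq _ _ _ _ (ne_of_gt hden5) (by ring)
    rw [hstep, ncf_cons _ _ (by simp), ncf_cons _ _ (by simp), ncf_cons _ _ (by simp),
      ncf_cons _ _ hRne, e1, e2, e3, e4, hrec]
    rw [div_eq_div_iff (ne_of_gt hden5) (by intro h; apply ne_of_gt hden5; linarith)]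
    ring


lemma ncfZ_eq (l : List ℤ) : ncfZ l = ncf (List.map (fun x : ℤ => (x:ℚ)) l) := by
  unfold ncfZ
  congr 1
  induction l with
  | nil => rfl
  | cons a t ih => simpa using ih

lemma map_cast_rep6 : ∀ n : ℕ,
    List.map (fun x : ℤ => (x:ℚ)) (List.replicate n (6:ℤ)) = List.replicate n (6:ℚ) := by
  intro n
  induction n with
  | zero => rfl
  | succ k ih =>
    rw [List.replicate_succ, List.map_cons, ih, List.replicate_succ]
    norm_num

lemma map_cast_flat : ∀ n : ℕ,
    List.map (fun x : ℤ => (x:ℚ)) ((List.replicate n [(3:ℤ),2,2,2]).flatten ++ [(2:ℤ)])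
      = (List.replicate n [(3:ℚ),2,2,2]).flatten ++ [2] := by
  intro n
  induction n with
  | zero => norm_num
  | succ k ih =>
    have h1 : (List.replicate (k+1) [(3:ℤ),2,2,2]).flatten ++ [(2:ℤ)]
        = 3 :: 2 :: 2 :: 2 :: ((List.replicate k [(3:ℤ),2,2,2]).flatten ++ [2]) := by
      simp [List.replicate_succ]
    have h2 : (List.replicate (k+1) [(3:ℚ),2,2,2]).flatten ++ [(2:ℚ)]
        = 3 :: 2 :: 2 :: 2 :: ((List.replicate k [(3:ℚ),2,2,2]).flatten ++ [2]) := by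
      simp [List.replicate_succ]
    rw [h1, List.map_cons, List.map_cons, List.map_cons, List.map_cons, ih, h2]
    norm_num

theorem complementary_four_sixes (l : ℕ) :
    Complementary ((4 : ℤ) :: List.replicate l 6)
      ((2 : ℤ) :: (2 : ℤ) :: ((List.replicate l [(3 : ℤ), 2, 2, 2]).flatten ++ [2])) := by
  obtain ⟨hb0, hblt⟩ := q_nonneg_lt l
  have hb0' : (0:ℚ) ≤ (q l : ℚ) := by exact_mod_cast hb0
  have hba : (q l : ℚ) < (q (l+1) : ℚ) := by exact_mod_cast hblt
  set a : ℚ := (q (l+1) : ℚ) with ha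
  set b : ℚ := (q l : ℚ) with hbq
  have hden1 : (0:ℚ) < a - b := by linarith
  have hden2 : (0:ℚ) < 2*a - b := by linarith
  have hden3 : (0:ℚ) < 3*a - b := by linarith
  have hden4 : (0:ℚ) < 4*a - b := by linarith
  -- value of the first continued fraction
  have hA : ncfZ ((4 : ℤ) :: List.replicate l 6) = (4*a - b) / a := by
    rw [ncfZ_eq, List.map_cons, map_cast_rep6]
    cases l with
    | zero =>
      norm_num [ncf, ha, hbq, q]
    | succ m =>
      rw [show (((4:ℤ):ℚ)) = (4:ℚ) by norm_num, ncf_cons _ _ (by simp), ncf_rep6 m]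
      have hbpos : (0:ℚ) < b := by
        have h : (1:ℤ) ≤ q (m+1) := by have := q_nonneg_lt m; omega
        rw [hbq]; exact_mod_cast h
      have hapos : (0:ℚ) < a := by linarith
      rw [show ((q (m+1+1) : ℚ)) = a from rfl, show ((q (m+1) : ℚ)) = b from rfl]
      rw [one_div_div]; exact sub_div_eq _ _ _ _ (ne_of_gt hapos) (by ring)
  -- value of the second continued fraction
  have hB : ncfZ ((2 : ℤ) :: (2 : ℤ) :: ((List.replicate l [(3 : ℤ), 2, 2, 2]).flatten ++ [2]))
      = (4*a - b) / (3*a - b) := by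
    rw [ncfZ_eq, List.map_cons, List.map_cons, map_cast_flat,
      show (((2:ℤ):ℚ)) = (2:ℚ) by norm_num,
      ncf_cons _ _ (by simp), ncf_cons _ _ (by simp), ncf_T l]
    rw [← ha, ← hbq]
    have e1 : 2 - 1 / ((2*a - b) / (a - b)) = (3*a - b) / (2*a - b) := by
      rw [one_div_div]; exact sub_div_eq _ _ _ _ (ne_of_gt hden2) (by ring)
    have e2 : 2 - 1 / ((3*a - b) / (2*a - b)) = (4*a - b) / (3*a - b) := by
      rw [one_div_div]; exact sub_div_eq _ _ _ _ (ne_of_gt hden3) (by ring)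
    rw [e1, e2]
  refine ⟨by simp, by simp, ?_, ?_, ?_⟩
  · intro x hx
    simp only [List.mem_cons, List.mem_replicate] at hx
    rcases hx with h | ⟨_, h⟩ <;> omega
  · intro x hx
    simp only [List.mem_cons, List.mem_append, List.mem_flatten, List.mem_replicate,
      List.mem_singleton, List.not_mem_nil, or_false] at hx
    rcases hx with h | h | ⟨L, ⟨_, hL⟩, hxL⟩ | h
    · omega
    · omega
    · subst hL
      simp only [List.mem_cons, List.not_mem_nil, or_false] at hxL
      rcases hxL with h | h | h | h <;> omega
    · omega
  · rw [hA, hB]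
    have hapos : (0:ℚ) < a := by linarith
    rw [one_div_div, one_div_div, div_add_div _ _ (ne_of_gt hden4) (ne_of_gt hden4)]
    rw [div_eq_one_iff_eq (by positivity)]
    ring
end
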